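/- Let F be a field of characteristic 0 and q ≥ 1. For all g, h : Fin q → ZMod 2 × ZMod 2, the commutator c_g · c_h − c_h · c_g is either the zero matrix or an invertible matrix in M_{2^q}(F). -/

import Mathlib

open Matrix

def sigmaP (F : Type*) [Field F] (u : ZMod 2 × ZMod 2) : Matrix (Fin 2) (Fin 2) F :=
  if u = (0, 0) then !![1, 0; 0, 1]
  else if u = (1, 0) then !![1, 0; 0, -1]
  else if u = (0, 1) then !![0, 1; 1, 0]
  else !![0, 1; -1, 0]

def pauliKron (F : Type*) [Field F] : {q : ℕ} → (Fin q → ZMod 2 × ZMod 2) →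
    Matrix (Fin (2 ^ q)) (Fin (2 ^ q)) F
  | 0, _ => 1
  | q + 1, g =>
      Matrix.reindex (finProdFinEquiv.trans (finCongr (pow_succ 2 q).symm))
        (finProdFinEquiv.trans (finCongr (pow_succ 2 q).symm))
        (Matrix.kroneckerMap (· * ·) (pauliKron F (fun i => g i.castSucc))
          (sigmaP F (g (Fin.last q))))

/-!
Pauli strings multiply like their labels up to sign: `c_g * c_h = ± c_(g+h)`. Since `g + g = 0`,
every `c_g` squares to `±1` and is invertible. Both `c_g * c_h` and `c_h * c_g` are therefore
`± c_(g+h)`, so their difference is `0` or `± 2 c_(g+h)`, a unit because `2 ≠ 0` in `F`.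
-/

theorem sub_eq_zero_or_isUnit_of_units_smul {R : Type*} [Ring R] {c : R} (hc : IsUnit c)
    (h2 : IsUnit (2 : R)) (ε δ : ℤˣ) : ε • c - δ • c = 0 ∨ IsUnit (ε • c - δ • c) := by
  have h2c : IsUnit (c + c) := two_mul c ▸ h2.mul hc
  rcases Int.units_eq_one_or ε with rfl | rfl <;> rcases Int.units_eq_one_or δ with rfl | rfl
  · simp
  · exact .inr (by simpa using h2c)
  · refine .inr ?_
    convert h2c.neg using 1
    simp only [Units.smul_def, Units.val_neg, Units.val_one, neg_smul, one_smul]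
    abel
  · simp

theorem Matrix.isUnit_two {n F : Type*} [Fintype n] [DecidableEq n] [Field F] [NeZero (2 : F)] :
    IsUnit (2 : Matrix n n F) := by
  simpa only [map_ofNat] using (two_ne_zero (α := F)).isUnit.map (algebraMap F (Matrix n n F))

theorem sigmaP_mul (F : Type*) [Field F] (u v : ZMod 2 × ZMod 2) :
    ∃ ε : ℤˣ, sigmaP F u * sigmaP F v = ε • sigmaP F (u + v) := by
  obtain ⟨u₁, u₂⟩ := u
  obtain ⟨v₁, v₂⟩ := v
  fin_cases u₁ <;> fin_cases u₂ <;> fin_cases v₁ <;> fin_cases v₂ <;>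
    first
    | (refine ⟨1, ?_⟩; simp +decide [sigmaP]; done)
    | (refine ⟨-1, ?_⟩; simp +decide [sigmaP])

open Kronecker in
theorem pauliKron_succ (F : Type*) [Field F] {q : ℕ} (g : Fin (q + 1) → ZMod 2 × ZMod 2) :
    pauliKron F g =
      reindex (finProdFinEquiv.trans (finCongr (pow_succ 2 q).symm))
        (finProdFinEquiv.trans (finCongr (pow_succ 2 q).symm))
        (pauliKron F (fun i => g i.castSucc) ⊗ₖ sigmaP F (g (Fin.last q))) := rfl

theorem pauliKron_mul (F : Type*) [Field F] {q : ℕ} (g h : Fin q → ZMod 2 × ZMod 2) :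
    ∃ ε : ℤˣ, pauliKron F g * pauliKron F h = ε • pauliKron F (g + h) := by
  induction q with
  | zero => exact ⟨1, by simp [pauliKron]⟩
  | succ q ih =>
    obtain ⟨ε, hε⟩ := ih (fun i => g i.castSucc) (fun i => h i.castSucc)
    obtain ⟨δ, hδ⟩ := sigmaP_mul F (g (Fin.last q)) (h (Fin.last q))
    refine ⟨δ * ε, ?_⟩
    simp only [pauliKron_succ, reindex_apply, submatrix_mul_equiv, ← mul_kronecker_mul, hε, hδ,
      smul_kronecker, kronecker_smul, submatrix_smul, mul_smul]
    rfl

theorem pauliKron_zero (F : Type*) [Field F] (q : ℕ) :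
    pauliKron F (0 : Fin q → ZMod 2 × ZMod 2) = 1 := by
  induction q with
  | zero => rfl
  | succ q ih =>
    have hσ : sigmaP F 0 = 1 := by simp [sigmaP, one_fin_two, Prod.zero_eq_mk]
    rw [pauliKron_succ]
    simp only [Pi.zero_apply, hσ]
    rw [← Pi.zero_def, ih, one_kronecker_one, reindex_apply, submatrix_one_equiv]

theorem pauliKron_isUnit (F : Type*) [Field F] {q : ℕ} (g : Fin q → ZMod 2 × ZMod 2) :
    IsUnit (pauliKron F g) := by
  obtain ⟨ε, hε⟩ := pauliKron_mul F g g
  have hgg : g + g = 0 :=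
    funext fun i => Prod.ext (CharTwo.add_self_eq_zero _) (CharTwo.add_self_eq_zero _)
  rw [hgg, pauliKron_zero] at hε
  refine ⟨⟨pauliKron F g, ε • pauliKron F g, ?_, ?_⟩, rfl⟩ <;>
    simp [mul_smul_comm, smul_mul_assoc, hε, smul_smul]

theorem pauliKron_commutator_zero_or_isUnit_general (F : Type*) [Field F] [CharZero F]
    (q : ℕ) (g h : Fin q → ZMod 2 × ZMod 2) :
    pauliKron F g * pauliKron F h - pauliKron F h * pauliKron F g = 0 ∨
    IsUnit (pauliKron F g * pauliKron F h - pauliKron F h * pauliKron F g) := by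
  obtain ⟨ε, hgh⟩ := pauliKron_mul F g h
  obtain ⟨δ, hhg⟩ := pauliKron_mul F h g
  rw [hgh, hhg, add_comm h g]
  exact sub_eq_zero_or_isUnit_of_units_smul (pauliKron_isUnit F (g + h)) isUnit_two ε δ

/-- The commutator of two homogeneous basis matrices is either zero or invertible. -/
theorem pauliKron_commutator_zero_or_isUnit (F : Type*) [Field F] [CharZero F]
    (q : ℕ) (hq : 1 ≤ q) (g h : Fin q → ZMod 2 × ZMod 2) :
    pauliKron F g * pauliKron F h - pauliKron F h * pauliKron F g = 0 ∨
    IsUnit (pauliKron F g * pauliKron F h - pauliKron F h * pauliKron F g) :=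
  pauliKron_commutator_zero_or_isUnit_general F q g h
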